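/- Let A : ℝ^{n₁×n₂} → ℝ^m be a linear map with adjoint A*, b ∈ ℝ^m, and suppose the step sizes satisfy 0 < inf_k δ_k ≤ sup_k δ_k < 2/‖A‖₂², where ‖A‖₂ := sup{‖A(X)‖ : ‖X‖_F = 1}. Then the sequence {X^k} defined by X^k = D_τ(A*(y^{k−1})), y^k = y^{k−1} + δ_k (b − A(X^k)), started from y⁰ = 0, converges to the unique solution of: minimize τ‖X‖_* + (1/2)‖X‖_F² subject to A(X) = b. -/

import Mathlib

/-!
A saddle point `(X⋆, y⋆)` of the Lagrangian gives `A X⋆ = b` and makes `X⋆` the proximal point of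
`τ‖·‖_*` at `A* y⋆`, just as `Xᵏ⁺¹` is the proximal point at `A* yᵏ`. Since `τ‖·‖_*` is convex (by
von Neumann's trace inequality), the proximal map is firmly nonexpansive:
`‖Xᵏ⁺¹ - X⋆‖_F² ≤ ⟨yᵏ - y⋆, A (Xᵏ⁺¹ - X⋆)⟩`. Expanding the dual update then gives
`‖yᵏ⁺¹ - y⋆‖² ≤ ‖yᵏ - y⋆‖² - δ (2 - δ ‖A‖₂²) ‖Xᵏ⁺¹ - X⋆‖_F²`, so the squared errors are summable.
Uniqueness is firm nonexpansiveness once more: every minimiser is a proximal point at `A* y⋆`.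
-/

open Matrix Filter Topology

noncomputable def frob {n₁ n₂ : ℕ} (X : Matrix (Fin n₁) (Fin n₂) ℝ) : ℝ :=
  Real.sqrt (∑ i, ∑ j, (X i j) ^ 2)

noncomputable def mInner {n₁ n₂ : ℕ} (X Y : Matrix (Fin n₁) (Fin n₂) ℝ) : ℝ :=
  ∑ i, ∑ j, X i j * Y i j

noncomputable def singVal {n₁ n₂ : ℕ} (X : Matrix (Fin n₁) (Fin n₂) ℝ) (j : Fin n₂) : ℝ :=
  Real.sqrt ((Matrix.isHermitian_conjTranspose_mul_self X).eigenvalues j)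

noncomputable def nuclearNorm {n₁ n₂ : ℕ} (X : Matrix (Fin n₁) (Fin n₂) ℝ) : ℝ :=
  ∑ j, singVal X j

noncomputable def specNorm {n₁ n₂ : ℕ} (X : Matrix (Fin n₁) (Fin n₂) ℝ) : ℝ :=
  ⨆ j, singVal X j

noncomputable def ftau {n₁ n₂ : ℕ} (τ : ℝ) (X : Matrix (Fin n₁) (Fin n₂) ℝ) : ℝ :=
  τ * nuclearNorm X + (1 / 2) * frob X ^ 2

def projSet {n₁ n₂ : ℕ} (Ω : Finset (Fin n₁ × Fin n₂)) (X : Matrix (Fin n₁) (Fin n₂) ℝ) :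
    Matrix (Fin n₁) (Fin n₂) ℝ :=
  Matrix.of fun i j => if (i, j) ∈ Ω then X i j else 0

def IsSubgradAt {n₁ n₂ : ℕ} (f : Matrix (Fin n₁) (Fin n₂) ℝ → ℝ)
    (Z X₀ : Matrix (Fin n₁) (Fin n₂) ℝ) : Prop :=
  ∀ X, f X₀ + mInner Z (X - X₀) ≤ f X

noncomputable def eNorm {m : ℕ} (v : Fin m → ℝ) : ℝ := Real.sqrt (∑ i, v i ^ 2)

noncomputable def eInner {m : ℕ} (v w : Fin m → ℝ) : ℝ := ∑ i, v i * w i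

section FrobeniusInner

variable {n₁ n₂ : ℕ}

lemma mInner_comm (X Y : Matrix (Fin n₁) (Fin n₂) ℝ) : mInner X Y = mInner Y X := by
  simp only [mInner, mul_comm]

lemma mInner_add_left (X Y Z : Matrix (Fin n₁) (Fin n₂) ℝ) :
    mInner (X + Y) Z = mInner X Z + mInner Y Z := by
  simp only [mInner, Matrix.add_apply, add_mul, Finset.sum_add_distrib]

lemma mInner_sub_left (X Y Z : Matrix (Fin n₁) (Fin n₂) ℝ) :
    mInner (X - Y) Z = mInner X Z - mInner Y Z := by
  simp only [mInner, Matrix.sub_apply, sub_mul, Finset.sum_sub_distrib]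

lemma mInner_smul_left (c : ℝ) (X Y : Matrix (Fin n₁) (Fin n₂) ℝ) :
    mInner (c • X) Y = c * mInner X Y := by
  simp only [mInner, Matrix.smul_apply, smul_eq_mul, Finset.mul_sum, mul_assoc]

lemma mInner_add_right (X Y Z : Matrix (Fin n₁) (Fin n₂) ℝ) :
    mInner X (Y + Z) = mInner X Y + mInner X Z := by
  rw [mInner_comm, mInner_add_left, mInner_comm Y, mInner_comm Z]

lemma mInner_sub_right (X Y Z : Matrix (Fin n₁) (Fin n₂) ℝ) :
    mInner X (Y - Z) = mInner X Y - mInner X Z := by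
  rw [mInner_comm, mInner_sub_left, mInner_comm Y, mInner_comm Z]

lemma mInner_smul_right (c : ℝ) (X Y : Matrix (Fin n₁) (Fin n₂) ℝ) :
    mInner X (c • Y) = c * mInner X Y := by
  rw [mInner_comm, mInner_smul_left, mInner_comm]

lemma mInner_self (X : Matrix (Fin n₁) (Fin n₂) ℝ) : mInner X X = frob X ^ 2 := by
  rw [frob, Real.sq_sqrt (by positivity)]
  simp only [mInner, sq]

lemma frob_sq_add_smul (X Y : Matrix (Fin n₁) (Fin n₂) ℝ) (t : ℝ) :
    frob (X + t • Y) ^ 2 = frob X ^ 2 + 2 * t * mInner X Y + t ^ 2 * frob Y ^ 2 := by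
  simp only [← mInner_self, mInner_add_left, mInner_add_right, mInner_smul_left,
    mInner_smul_right, mInner_comm Y X]
  ring

lemma frob_sq_sub (X Y : Matrix (Fin n₁) (Fin n₂) ℝ) :
    frob (X - Y) ^ 2 = frob X ^ 2 - 2 * mInner Y X + frob Y ^ 2 := by
  rw [sub_eq_add_neg, ← neg_one_smul ℝ Y, frob_sq_add_smul, mInner_comm]
  ring

end FrobeniusInner

section FrobeniusNorm

variable {n₁ n₂ : ℕ}

/-- Mathlib's Frobenius norm instance on `Matrix` does not carry the product topology reducibly, so
operator norms are taken through this isometry instead. -/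
noncomputable def flattenEuclidean :
    Matrix (Fin n₁) (Fin n₂) ℝ ≃ₗ[ℝ] EuclideanSpace ℝ (Fin n₁ × Fin n₂) :=
  (LinearEquiv.curry ℝ ℝ (Fin n₁) (Fin n₂)).symm.trans (WithLp.linearEquiv 2 ℝ _).symm

lemma flattenEuclidean_apply (X : Matrix (Fin n₁) (Fin n₂) ℝ) :
    flattenEuclidean X = WithLp.toLp 2 (fun p => X p.1 p.2) :=
  rfl

lemma frob_eq_norm_flattenEuclidean (X : Matrix (Fin n₁) (Fin n₂) ℝ) :
    frob X = ‖flattenEuclidean X‖ := by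
  simp only [frob, flattenEuclidean_apply, EuclideanSpace.norm_eq, Real.norm_eq_abs, sq_abs,
    Fintype.sum_prod_type]

lemma eNorm_eq_norm {m : ℕ} (v : Fin m → ℝ) : eNorm v = ‖WithLp.toLp 2 v‖ := by
  simp only [eNorm, EuclideanSpace.norm_eq, Real.norm_eq_abs, sq_abs]

lemma eNorm_sq {m : ℕ} (v : Fin m → ℝ) : eNorm v ^ 2 = v ⬝ᵥ v := by
  rw [eNorm, Real.sq_sqrt (by positivity)]
  simp only [dotProduct, sq]

lemma eNorm_nonneg {m : ℕ} (v : Fin m → ℝ) : 0 ≤ eNorm v := Real.sqrt_nonneg _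

lemma eq_zero_of_frob_eq_zero {X : Matrix (Fin n₁) (Fin n₂) ℝ} (h : frob X = 0) : X = 0 := by
  rwa [frob_eq_norm_flattenEuclidean, norm_eq_zero, LinearEquiv.map_eq_zero_iff] at h

lemma eNorm_le_sSup_mul_frob {m : ℕ} (A : Matrix (Fin n₁) (Fin n₂) ℝ →ₗ[ℝ] (Fin m → ℝ))
    (X : Matrix (Fin n₁) (Fin n₂) ℝ) :
    eNorm (A X) ≤ sSup {c : ℝ | ∃ X, frob X = 1 ∧ c = eNorm (A X)} * frob X := by
  let Â : EuclideanSpace ℝ (Fin n₁ × Fin n₂) →L[ℝ] EuclideanSpace ℝ (Fin m) :=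
    LinearMap.toContinuousLinearMap ((WithLp.linearEquiv 2 ℝ (Fin m → ℝ)).symm.toLinearMap ∘ₗ A
      ∘ₗ flattenEuclidean.symm.toLinearMap)
  have hÂ : ∀ X, ‖Â (flattenEuclidean X)‖ = eNorm (A X) := fun X => by
    simp [Â, eNorm_eq_norm]
  have hset : {c : ℝ | ∃ X, frob X = 1 ∧ c = eNorm (A X)} =
      (fun x => ‖Â x‖) '' Metric.sphere 0 1 := by
    ext c
    simp only [Set.mem_ofPred_eq, Set.mem_image, mem_sphere_zero_iff_norm,
      flattenEuclidean.surjective.exists, hÂ, frob_eq_norm_flattenEuclidean, eq_comm]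
  rw [hset, Â.sSup_sphere_eq_norm, ← hÂ, frob_eq_norm_flattenEuclidean]
  exact Â.le_opNorm _

lemma tendsto_of_frob_sq_sub_tendsto_zero {X : ℕ → Matrix (Fin n₁) (Fin n₂) ℝ}
    {L : Matrix (Fin n₁) (Fin n₂) ℝ} (h : Tendsto (fun k => frob (X k - L) ^ 2) atTop (𝓝 0)) :
    Tendsto X atTop (𝓝 L) := by
  have hflat : Tendsto (fun k => flattenEuclidean (X k)) atTop (𝓝 (flattenEuclidean L)) := by
    rw [tendsto_iff_norm_sub_tendsto_zero]
    simpa [frob_eq_norm_flattenEuclidean, Real.sqrt_sq (norm_nonneg _)] using h.sqrt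
  simpa [Function.comp_def] using ((LinearMap.continuous_of_finiteDimensional
    flattenEuclidean.symm.toLinearMap).tendsto _).comp hflat

end FrobeniusNorm

section NuclearNorm

open InnerProductSpace

variable {n₁ n₂ : ℕ} (M : Matrix (Fin n₁) (Fin n₂) ℝ)

noncomputable abbrev rightSingVec : OrthonormalBasis (Fin n₂) ℝ (EuclideanSpace ℝ (Fin n₂)) :=
  (isHermitian_conjTranspose_mul_self M).eigenvectorBasis

lemma inner_toEuclideanLin_rightSingVec (i j : Fin n₂) :
    ⟪toEuclideanLin M (rightSingVec M i), toEuclideanLin M (rightSingVec M j)⟫_ℝ =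
      singVal M j ^ 2 * ⟪rightSingVec M i, rightSingVec M j⟫_ℝ := by
  have hH := isHermitian_conjTranspose_mul_self M
  rw [← LinearMap.adjoint_inner_right, ← toEuclideanLin_conjTranspose_eq_adjoint]
  have : toEuclideanLin Mᴴ (toEuclideanLin M (rightSingVec M j)) =
      hH.eigenvalues j • rightSingVec M j := by
    apply WithLp.ofLp_injective
    simp only [ofLp_toLpLin, Matrix.toLin'_apply, Matrix.mulVec_mulVec,
      hH.mulVec_eigenvectorBasis, WithLp.ofLp_smul]
  rw [this, inner_smul_right, singVal, Real.sq_sqrt (eigenvalues_conjTranspose_mul_self_nonneg M j)]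

lemma norm_toEuclideanLin_rightSingVec (i : Fin n₂) :
    ‖toEuclideanLin M (rightSingVec M i)‖ = singVal M i := by
  have h := inner_toEuclideanLin_rightSingVec M i i
  rw [real_inner_self_eq_norm_sq, real_inner_self_eq_norm_sq, (rightSingVec M).norm_eq_one,
    one_pow, mul_one] at h
  exact (pow_left_inj₀ (norm_nonneg _) (Real.sqrt_nonneg _) two_ne_zero).mp h

theorem sum_inner_toEuclideanLin_le_nuclearNorm {ι : Type*} [Fintype ι]
    {u : ι → EuclideanSpace ℝ (Fin n₁)} {v : ι → EuclideanSpace ℝ (Fin n₂)}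
    (hu : Orthonormal ℝ u) (hv : Orthonormal ℝ v) :
    ∑ j, ⟪u j, toEuclideanLin M (v j)⟫_ℝ ≤ nuclearNorm M := by
  set q := rightSingVec M
  have hexpand : ∀ j, ⟪u j, toEuclideanLin M (v j)⟫_ℝ =
      ∑ i, ⟪v j, q i⟫_ℝ * ⟪u j, toEuclideanLin M (q i)⟫_ℝ := fun j => by
    conv_lhs => rw [← q.sum_repr' (v j)]
    simp [map_sum, inner_sum, inner_smul_right, real_inner_comm]
  calc ∑ j, ⟪u j, toEuclideanLin M (v j)⟫_ℝ
      = ∑ i, ∑ j, ⟪v j, q i⟫_ℝ * ⟪u j, toEuclideanLin M (q i)⟫_ℝ := by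
        simp only [hexpand]; exact Finset.sum_comm
    _ ≤ ∑ i, √(∑ j, ⟪v j, q i⟫_ℝ ^ 2) * √(∑ j, ⟪u j, toEuclideanLin M (q i)⟫_ℝ ^ 2) :=
        Finset.sum_le_sum fun i _ => Real.sum_mul_le_sqrt_mul_sqrt _ _ _
    _ ≤ ∑ i, 1 * singVal M i := by
        gcongr with i
        · rw [Real.sqrt_le_one]
          simpa [q.norm_eq_one] using hv.sum_inner_products_le (q i) (s := Finset.univ)
        · rw [← norm_toEuclideanLin_rightSingVec, Real.sqrt_le_left (norm_nonneg _)]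
          simpa using hu.sum_inner_products_le (toEuclideanLin M (q i)) (s := Finset.univ)
    _ = nuclearNorm M := by simp [nuclearNorm]

lemma exists_orthonormal_nuclearNorm_eq :
    ∃ (ι : Type) (_ : Fintype ι) (u : ι → EuclideanSpace ℝ (Fin n₁))
      (v : ι → EuclideanSpace ℝ (Fin n₂)), Orthonormal ℝ u ∧ Orthonormal ℝ v ∧
      nuclearNorm M = ∑ j, ⟪u j, toEuclideanLin M (v j)⟫_ℝ := by
  classical
  let S := Finset.univ.filter fun i => singVal M i ≠ 0
  let u : Fin n₂ → EuclideanSpace ℝ (Fin n₁) :=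
    fun i => (singVal M i)⁻¹ • toEuclideanLin M (rightSingVec M i)
  refine ⟨S, inferInstance, fun i => u i, fun i => rightSingVec M i, ?_,
    (rightSingVec M).orthonormal.comp _ Subtype.val_injective, ?_⟩
  · rw [orthonormal_iff_ite]
    rintro ⟨i, hi⟩ ⟨j, hj⟩
    have hσ : singVal M j ≠ 0 := (Finset.mem_filter.mp hj).2
    simp only [u, real_inner_smul_left, real_inner_smul_right, inner_toEuclideanLin_rightSingVec,
      orthonormal_iff_ite.mp (rightSingVec M).orthonormal, Subtype.mk.injEq]
    split_ifs with h
    · subst h; field_simp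
    · simp
  · have hdiag : ∀ i, ⟪u i, toEuclideanLin M (rightSingVec M i)⟫_ℝ = singVal M i := fun i => by
      rw [real_inner_smul_left, real_inner_self_eq_norm_sq, norm_toEuclideanLin_rightSingVec]
      by_cases h : singVal M i = 0 <;> field_simp [h]
    rw [Finset.sum_coe_sort S fun i => ⟪u i, toEuclideanLin M (rightSingVec M i)⟫_ℝ]
    simp only [hdiag, S, Finset.sum_filter_ne_zero, nuclearNorm]

theorem convexOn_nuclearNorm :
    ConvexOn ℝ Set.univ (nuclearNorm : Matrix (Fin n₁) (Fin n₂) ℝ → ℝ) := by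
  refine ⟨convex_univ, fun Y _ Z _ a b ha hb _ => ?_⟩
  obtain ⟨ι, _, u, v, hu, hv, hrep⟩ := exists_orthonormal_nuclearNorm_eq (a • Y + b • Z)
  rw [hrep]
  simp only [map_add, map_smul, LinearMap.add_apply, LinearMap.smul_apply, inner_add_right,
    inner_smul_right, Finset.sum_add_distrib, ← Finset.mul_sum, smul_eq_mul]
  gcongr
  exacts [sum_inner_toEuclideanLin_le_nuclearNorm Y hu hv,
    sum_inner_toEuclideanLin_le_nuclearNorm Z hu hv]

end NuclearNorm

lemma nonneg_of_forall_mem_Ioc_nonneg_add_mul {C B : ℝ}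
    (h : ∀ t ∈ Set.Ioc (0 : ℝ) 1, 0 ≤ C + t * B) : 0 ≤ C := by
  have hcont : Continuous fun t : ℝ => C + t * B := by fun_prop
  have hlim : Tendsto (fun t : ℝ => C + t * B) (𝓝[>] 0) (𝓝 C) := by
    simpa using (hcont.tendsto 0).mono_left nhdsWithin_le_nhds
  exact ge_of_tendsto hlim (Filter.mem_of_superset (Ioc_mem_nhdsGT one_pos) h)

section Prox

variable {n₁ n₂ : ℕ} {f : Matrix (Fin n₁) (Fin n₂) ℝ → ℝ}

theorem isSubgradAt_of_isMinOn_prox (hf : ConvexOn ℝ Set.univ f)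
    {W P : Matrix (Fin n₁) (Fin n₂) ℝ}
    (hP : IsMinOn (fun Z => f Z + 1 / 2 * frob (Z - W) ^ 2) Set.univ P) :
    IsSubgradAt f (W - P) P := by
  intro Q
  -- compare `P` with `P + t • (Q - P)` and let `t → 0⁺`
  suffices 0 ≤ f Q - f P - mInner (W - P) (Q - P) by linarith
  refine nonneg_of_forall_mem_Ioc_nonneg_add_mul (B := frob (Q - P) ^ 2 / 2) fun t ⟨ht0, ht1⟩ => ?_
  have hconv : f (P + t • (Q - P)) ≤ (1 - t) * f P + t * f Q := by
    rw [show P + t • (Q - P) = (1 - t) • P + t • Q by module]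
    exact hf.2 (Set.mem_univ P) (Set.mem_univ Q) (by linarith) ht0.le (by ring)
  have hmin := isMinOn_univ_iff.mp hP (P + t • (Q - P))
  have hsq : frob (P + t • (Q - P) - W) ^ 2 =
      frob (P - W) ^ 2 + 2 * t * mInner (P - W) (Q - P) + t ^ 2 * frob (Q - P) ^ 2 := by
    rw [← frob_sq_add_smul, add_sub_right_comm]
  have hneg : mInner (P - W) (Q - P) = - mInner (W - P) (Q - P) := by
    rw [mInner_sub_left, mInner_sub_left]; ring
  simp only [hsq, hneg] at hmin
  have hscaled : 0 ≤ t * (f Q - f P - mInner (W - P) (Q - P) + t * (frob (Q - P) ^ 2 / 2)) := by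
    linarith
  exact (mul_nonneg_iff_of_pos_left ht0).mp hscaled

theorem IsSubgradAt.frob_sq_sub_le_mInner {W₁ W₂ P₁ P₂ : Matrix (Fin n₁) (Fin n₂) ℝ}
    (h₁ : IsSubgradAt f (W₁ - P₁) P₁) (h₂ : IsSubgradAt f (W₂ - P₂) P₂) :
    frob (P₁ - P₂) ^ 2 ≤ mInner (P₁ - P₂) (W₁ - W₂) := by
  have h₁₂ := h₁ P₂
  have h₂₁ := h₂ P₁
  have hsum : mInner (W₁ - P₁) (P₂ - P₁) + mInner (W₂ - P₂) (P₁ - P₂) =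
      frob (P₁ - P₂) ^ 2 - mInner (P₁ - P₂) (W₁ - W₂) := by
    simp only [← mInner_self, mInner_sub_left, mInner_sub_right, mInner_comm P₂ P₁,
      mInner_comm W₁, mInner_comm W₂]
    ring
  linarith

theorem eq_of_isMinOn_prox (hf : ConvexOn ℝ Set.univ f) {W P Q : Matrix (Fin n₁) (Fin n₂) ℝ}
    (hP : IsMinOn (fun Z => f Z + 1 / 2 * frob (Z - W) ^ 2) Set.univ P)
    (hQ : IsMinOn (fun Z => f Z + 1 / 2 * frob (Z - W) ^ 2) Set.univ Q) : P = Q := by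
  have hfirm := (isSubgradAt_of_isMinOn_prox hf hP).frob_sq_sub_le_mInner
    (isSubgradAt_of_isMinOn_prox hf hQ)
  rw [mInner_sub_right, sub_self] at hfirm
  exact sub_eq_zero.mp (eq_zero_of_frob_eq_zero (pow_eq_zero_iff two_ne_zero |>.mp
    (le_antisymm hfirm (sq_nonneg _))))

end Prox

lemma dotProduct_sub_smul_self_add_le {ι : Type*} [Fintype ι] {d w : ι → ℝ} {s K a c δ : ℝ}
    (hs : s ≤ d ⬝ᵥ w) (hw : w ⬝ᵥ w ≤ K ^ 2 * s) (hs0 : 0 ≤ s) (ha : 0 ≤ a) (haδ : a ≤ δ)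
    (hδc : δ ≤ c) (hcK : c * K ^ 2 < 2) :
    (d - δ • w) ⬝ᵥ (d - δ • w) + a * (2 - c * K ^ 2) * s ≤ d ⬝ᵥ d := by
  have hexpand : (d - δ • w) ⬝ᵥ (d - δ • w) = d ⬝ᵥ d - 2 * δ * (d ⬝ᵥ w) + δ ^ 2 * (w ⬝ᵥ w) := by
    simp only [sub_dotProduct, dotProduct_sub, smul_dotProduct, dotProduct_smul, smul_eq_mul,
      dotProduct_comm w d]
    ring
  have hδ : 0 ≤ δ := ha.trans haδ
  have hgain : a * (2 - c * K ^ 2) * s ≤ δ * (2 - δ * K ^ 2) * s := by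
    gcongr ?_ * s
    nlinarith [mul_nonneg (sub_nonneg.mpr haδ) (by linarith : 0 ≤ 2 - c * K ^ 2),
      mul_nonneg hδ (mul_nonneg (sub_nonneg.mpr hδc) (sq_nonneg K))]
  rw [hexpand]
  nlinarith [mul_le_mul_of_nonneg_left hs hδ, mul_le_mul_of_nonneg_left hw (sq_nonneg δ)]

section Lagrangian

variable {n₁ n₂ m : ℕ} {τ : ℝ} {A : Matrix (Fin n₁) (Fin n₂) ℝ →ₗ[ℝ] (Fin m → ℝ)}
  {Astar : (Fin m → ℝ) →ₗ[ℝ] Matrix (Fin n₁) (Fin n₂) ℝ} {b : Fin m → ℝ}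

lemma ftau_add_eInner_eq (hadj : ∀ y X, mInner (Astar y) X = eInner y (A X))
    (y : Fin m → ℝ) (Z : Matrix (Fin n₁) (Fin n₂) ℝ) :
    ftau τ Z + eInner y (b - A Z) =
      τ * nuclearNorm Z + 1 / 2 * frob (Z - Astar y) ^ 2 +
        (eInner y b - 1 / 2 * frob (Astar y) ^ 2) := by
  have hlin : eInner y (b - A Z) = eInner y b - mInner (Astar y) Z := by
    rw [hadj]; exact dotProduct_sub y b (A Z)
  rw [ftau, hlin, frob_sq_sub]
  ring

lemma isMinOn_prox_of_lagrangian_le (hadj : ∀ y X, mInner (Astar y) X = eInner y (A X))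
    {y : Fin m → ℝ} {Z : Matrix (Fin n₁) (Fin n₂) ℝ}
    (hZ : ∀ X', ftau τ Z + eInner y (b - A Z) ≤ ftau τ X' + eInner y (b - A X')) :
    IsMinOn (fun Z => τ * nuclearNorm Z + 1 / 2 * frob (Z - Astar y) ^ 2) Set.univ Z :=
  isMinOn_univ_iff.mpr fun X' => by
    have := hZ X'
    rw [ftau_add_eInner_eq hadj, ftau_add_eInner_eq hadj] at this
    linarith

lemma eq_zero_of_forall_eInner_le {r y₀ : Fin m → ℝ} (h : ∀ y, eInner y r ≤ eInner y₀ r) :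
    r = 0 := by
  have hr : (y₀ + r) ⬝ᵥ r ≤ y₀ ⬝ᵥ r := h (y₀ + r)
  rw [add_dotProduct] at hr
  exact dotProduct_self_eq_zero.mp
    (le_antisymm (by linarith) (Fintype.sum_nonneg fun i => mul_self_nonneg (r i)))

theorem uzawa_dual_error_descent (hadj : ∀ y X, mInner (Astar y) X = eInner y (A X))
    (hτ : 0 ≤ τ) {K a c δ : ℝ} (hK : ∀ Z, eNorm (A Z) ≤ K * frob Z) (ha : 0 ≤ a) (haδ : a ≤ δ)
    (hδc : δ ≤ c) (hcK : c * K ^ 2 < 2) {y ys : Fin m → ℝ} {X Xs : Matrix (Fin n₁) (Fin n₂) ℝ}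
    (hAXs : A Xs = b)
    (hX : IsMinOn (fun Z => τ * nuclearNorm Z + 1 / 2 * frob (Z - Astar y) ^ 2) Set.univ X)
    (hXs : IsMinOn (fun Z => τ * nuclearNorm Z + 1 / 2 * frob (Z - Astar ys) ^ 2) Set.univ Xs) :
    (y + δ • (b - A X) - ys) ⬝ᵥ (y + δ • (b - A X) - ys) + a * (2 - c * K ^ 2) * frob (X - Xs) ^ 2
      ≤ (y - ys) ⬝ᵥ (y - ys) := by
  have hconv : ConvexOn ℝ Set.univ fun Z : Matrix (Fin n₁) (Fin n₂) ℝ => τ * nuclearNorm Z :=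
    convexOn_nuclearNorm.smul hτ
  have hfirm := (isSubgradAt_of_isMinOn_prox hconv hX).frob_sq_sub_le_mInner
    (isSubgradAt_of_isMinOn_prox hconv hXs)
  rw [← map_sub, mInner_comm, hadj] at hfirm
  have hbound : A (X - Xs) ⬝ᵥ A (X - Xs) ≤ K ^ 2 * frob (X - Xs) ^ 2 := by
    rw [← eNorm_sq, ← mul_pow]
    exact pow_le_pow_left₀ (eNorm_nonneg _) (hK _) 2
  rw [show y + δ • (b - A X) - ys = (y - ys) - δ • A (X - Xs) by rw [← hAXs, map_sub]; module]
  exact dotProduct_sub_smul_self_add_le hfirm hbound (sq_nonneg _) ha haδ hδc hcK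

end Lagrangian

lemma tendsto_zero_of_add_mul_le {φ e : ℕ → ℝ} {β : ℝ} (hβ : 0 < β) (hφ : ∀ k, 0 ≤ φ k)
    (he : ∀ k, 0 ≤ e k) (h : ∀ k, φ (k + 1) + β * e k ≤ φ k) : Tendsto e atTop (𝓝 0) := by
  have hanti : Antitone φ :=
    antitone_nat_of_succ_le fun k => by nlinarith [h k, he k]
  have hlim := tendsto_atTop_ciInf hanti ⟨0, Set.forall_mem_range.mpr hφ⟩
  have hdiff : Tendsto (fun k => (φ k - φ (k + 1)) / β) atTop (𝓝 0) := by
    simpa using (hlim.sub (hlim.comp (tendsto_add_atTop_nat 1))).div_const β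
  refine squeeze_zero he (fun k => ?_) hdiff
  rw [le_div_iff₀ hβ]
  linarith [h k]

theorem uzawa_linear_convergence_general (n₁ n₂ m : ℕ) (τ : ℝ) (hτ : 0 < τ)
    (A : Matrix (Fin n₁) (Fin n₂) ℝ →ₗ[ℝ] (Fin m → ℝ))
    (Astar : (Fin m → ℝ) →ₗ[ℝ] Matrix (Fin n₁) (Fin n₂) ℝ)
    (hadj : ∀ (y : Fin m → ℝ) (X : Matrix (Fin n₁) (Fin n₂) ℝ),
      mInner (Astar y) X = eInner y (A X))
    (b : Fin m → ℝ)
    (nA : ℝ) (hnA : nA = sSup {c : ℝ | ∃ X, frob X = 1 ∧ c = eNorm (A X)})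
    (hsaddle : ∃ (Xs : Matrix (Fin n₁) (Fin n₂) ℝ) (ys : Fin m → ℝ),
      (∀ X', ftau τ Xs + eInner ys (b - A Xs) ≤ ftau τ X' + eInner ys (b - A X')) ∧
      (∀ y', ftau τ Xs + eInner y' (b - A Xs) ≤ ftau τ Xs + eInner ys (b - A Xs)))
    (δ : ℕ → ℝ)
    (hδ : ∃ a c : ℝ, 0 < a ∧ c < 2 / nA ^ 2 ∧ ∀ k, a ≤ δ k ∧ δ k ≤ c)
    (X : ℕ → Matrix (Fin n₁) (Fin n₂) ℝ) (y : ℕ → Fin m → ℝ)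
    (hX : ∀ k, IsMinOn
      (fun Z => τ * nuclearNorm Z + (1 / 2) * frob (Z - Astar (y k)) ^ 2)
      Set.univ (X (k + 1)))
    (hy : ∀ k, y (k + 1) = y k + δ (k + 1) • (b - A (X (k + 1)))) :
    ∃ Xopt : Matrix (Fin n₁) (Fin n₂) ℝ,
      A Xopt = b ∧
      (∀ Z, A Z = b → ftau τ Xopt ≤ ftau τ Z) ∧
      (∀ Z, A Z = b → ftau τ Z = ftau τ Xopt → Z = Xopt) ∧
      Tendsto (fun k => X k) atTop (nhds Xopt) := by
  obtain ⟨a, c, ha, hc, hδ⟩ := hδ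
  obtain ⟨Xs, ys, hXs, hys⟩ := hsaddle
  have hAXs : A Xs = b :=
    (sub_eq_zero.mp (eq_zero_of_forall_eInner_le fun y' => by linarith [hys y'])).symm
  have hproxXs := isMinOn_prox_of_lagrangian_le hadj hXs
  -- for `nA = 0` the hypothesis `c < 2 / nA ^ 2` is junk, but the bound holds trivially
  have hcK : c * nA ^ 2 < 2 := by
    rcases eq_or_ne nA 0 with h0 | h0
    · simp [h0]
    · exact (lt_div_iff₀ (by positivity)).mp hc
  have hlim : Tendsto (fun k => frob (X (k + 1) - Xs) ^ 2) atTop (𝓝 0) := by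
    refine tendsto_zero_of_add_mul_le (φ := fun k => (y k - ys) ⬝ᵥ (y k - ys))
      (mul_pos ha (sub_pos.mpr hcK)) (fun k => Fintype.sum_nonneg fun i => mul_self_nonneg _)
      (fun k => sq_nonneg _) fun k => ?_
    rw [hy]
    exact uzawa_dual_error_descent hadj hτ.le (fun Z => hnA ▸ eNorm_le_sSup_mul_frob A Z) ha.le
      (hδ _).1 (hδ _).2 hcK hAXs (hX k) hproxXs
  refine ⟨Xs, hAXs, fun Z hZ => ?_, fun Z hZ hfZ => ?_,
    (tendsto_add_atTop_iff_nat 1).mp (tendsto_of_frob_sq_sub_tendsto_zero hlim)⟩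
  · simpa [hAXs, hZ, eInner] using hXs Z
  · refine eq_of_isMinOn_prox (convexOn_nuclearNorm.smul hτ.le) ?_ hproxXs
    exact isMinOn_prox_of_lagrangian_le (y := ys) hadj fun X' => by
      simpa only [hZ, hAXs, hfZ] using hXs X'

/-- Uzawa/SVT iteration with linear equality constraints. With `A` linear,
`A*` its adjoint, `‖A‖₂ = sup{‖A(X)‖ : ‖X‖_F = 1}`, a nonempty feasible set, strong
duality, and step sizes `0 < inf δ_k ≤ sup δ_k < 2/‖A‖₂²`, the iterates
`X^k = D_τ(A*(y^{k-1}))` (characterized as the prox minimizer),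
`y^k = y^{k-1} + δ_k(b - A(X^k))` from `y⁰ = 0` converge to the unique solution of:
minimize `τ‖X‖_* + (1/2)‖X‖_F²` subject to `A(X) = b`. -/
theorem uzawa_linear_convergence (n₁ n₂ m : ℕ) (τ : ℝ) (hτ : 0 < τ)
    (A : Matrix (Fin n₁) (Fin n₂) ℝ →ₗ[ℝ] (Fin m → ℝ))
    (Astar : (Fin m → ℝ) →ₗ[ℝ] Matrix (Fin n₁) (Fin n₂) ℝ)
    (hadj : ∀ (y : Fin m → ℝ) (X : Matrix (Fin n₁) (Fin n₂) ℝ),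
      mInner (Astar y) X = eInner y (A X))
    (b : Fin m → ℝ) (hfeas : ∃ X, A X = b)
    (nA : ℝ) (hnA : nA = sSup {c : ℝ | ∃ X, frob X = 1 ∧ c = eNorm (A X)})
    (hsaddle : ∃ (Xs : Matrix (Fin n₁) (Fin n₂) ℝ) (ys : Fin m → ℝ),
      (∀ X', ftau τ Xs + eInner ys (b - A Xs) ≤ ftau τ X' + eInner ys (b - A X')) ∧
      (∀ y', ftau τ Xs + eInner y' (b - A Xs) ≤ ftau τ Xs + eInner ys (b - A Xs)))
    (δ : ℕ → ℝ)
    (hδ : ∃ a c : ℝ, 0 < a ∧ c < 2 / nA ^ 2 ∧ ∀ k, a ≤ δ k ∧ δ k ≤ c)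
    (X : ℕ → Matrix (Fin n₁) (Fin n₂) ℝ) (y : ℕ → Fin m → ℝ)
    (hy0 : y 0 = 0)
    (hX : ∀ k, IsMinOn
      (fun Z => τ * nuclearNorm Z + (1 / 2) * frob (Z - Astar (y k)) ^ 2)
      Set.univ (X (k + 1)))
    (hy : ∀ k, y (k + 1) = y k + δ (k + 1) • (b - A (X (k + 1)))) :
    ∃ Xopt : Matrix (Fin n₁) (Fin n₂) ℝ,
      A Xopt = b ∧
      (∀ Z, A Z = b → ftau τ Xopt ≤ ftau τ Z) ∧
      (∀ Z, A Z = b → ftau τ Z = ftau τ Xopt → Z = Xopt) ∧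
      Tendsto (fun k => X k) atTop (nhds Xopt) :=
  uzawa_linear_convergence_general n₁ n₂ m τ hτ A Astar hadj b nA hnA hsaddle δ hδ X y hX hy
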